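/- Paraconsistency of LP→⊥: for every formula A of LP→⊥ in which ⊥ does not occur and every formula B of LP→⊥ in which no propositional variable occurs that occurs in A, if B is not a theorem of LP→⊥ (not ⊢ B), then B is not derivable from {A, ¬A} (not {A, ¬A} ⊢ B). -/

import Mathlib

set_option autoImplicit true
set_option maxHeartbeats 1000000

/-- The three truth values of LP→⊥: true, false, both. -/
inductive V3 : Type
  | t
  | f
  | b
  deriving DecidableEq

/-- Formulas of LP→⊥ over propositional variables of type `α`. -/
inductive Fml (α : Type) : Type
  | var : α → Fml α
  | bot : Fml α
  | neg : Fml α → Fml α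
  | conj : Fml α → Fml α → Fml α
  | disj : Fml α → Fml α → Fml α
  | imp : Fml α → Fml α → Fml α

namespace Fml

/-- ⊤ abbreviates ¬⊥. -/
def top {α : Type} : Fml α := neg bot

/-- A↔B abbreviates (A→B)∧(B→A). -/
def iff' {α : Type} (A B : Fml α) : Fml α := conj (imp A B) (imp B A)

end Fml

/-- LP→⊥ truth table for negation. -/
def negT : V3 → V3
  | .f => .t
  | .t => .f
  | .b => .b

/-- LP→⊥ truth table for conjunction. -/
def conjT : V3 → V3 → V3
  | .f, _ => .f
  | _, .f => .f
  | .t, .t => .t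
  | _, _ => .b

/-- LP→⊥ truth table for disjunction. -/
def disjT : V3 → V3 → V3
  | .t, _ => .t
  | _, .t => .t
  | .f, .f => .f
  | _, _ => .b

/-- LP→⊥ truth table for implication. -/
def impT : V3 → V3 → V3
  | .f, _ => .t
  | _, y => y

/-- The LP→⊥ valuation determined by an assignment `σ` of truth values to variables. -/
def eval {α : Type} (σ : α → V3) : Fml α → V3
  | .var x => σ x
  | .bot => .f
  | .neg A => negT (eval σ A)
  | .conj A B => conjT (eval σ A) (eval σ B)
  | .disj A B => disjT (eval σ A) (eval σ B)
  | .imp A B => impT (eval σ A) (eval σ B)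

/-- Logical equivalence in LP→⊥: the same value under every valuation. -/
def FEquiv {α : Type} (A B : Fml α) : Prop := ∀ σ : α → V3, eval σ A = eval σ B

/-- `φ ∈ [⊥]`: `φ` is logically equivalent to ⊥. -/
def EqBot {α : Type} (φ : Fml α) : Prop := ∀ σ : α → V3, eval σ φ = V3.f

/-- Semantic consequence in LP→⊥ (designated values t and b). -/
def SemCons {α : Type} (Γ : Set (Fml α)) (A : Fml α) : Prop :=
  ∀ σ : α → V3, (∀ C ∈ Γ, eval σ C ≠ V3.f) → eval σ A ≠ V3.f

/-- The Hilbert system of LP→⊥, with hypotheses `Γ`. -/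
inductive Hilb {α : Type} (Γ : Set (Fml α)) : Fml α → Prop
  | hyp {A : Fml α} : A ∈ Γ → Hilb Γ A
  | mp {A B : Fml α} : Hilb Γ (A.imp B) → Hilb Γ A → Hilb Γ B
  | ax1 (A B : Fml α) : Hilb Γ (A.imp (B.imp A))
  | ax2 (A B C : Fml α) : Hilb Γ ((A.imp (B.imp C)).imp ((A.imp B).imp (A.imp C)))
  | ax3 (A B : Fml α) : Hilb Γ (((A.imp B).imp A).imp A)
  | ax4 (A : Fml α) : Hilb Γ (Fml.bot.imp A)
  | ax5 (A B : Fml α) : Hilb Γ ((A.conj B).imp A)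
  | ax6 (A B : Fml α) : Hilb Γ ((A.conj B).imp B)
  | ax7 (A B : Fml α) : Hilb Γ (A.imp (B.imp (A.conj B)))
  | ax8 (A B : Fml α) : Hilb Γ (A.imp (A.disj B))
  | ax9 (A B : Fml α) : Hilb Γ (B.imp (A.disj B))
  | ax10 (A B C : Fml α) : Hilb Γ ((A.imp C).imp ((B.imp C).imp ((A.disj B).imp C)))
  | ax11 (A : Fml α) : Hilb Γ (Fml.iff' A.neg.neg A)
  | ax12 (A B : Fml α) : Hilb Γ (Fml.iff' (A.imp B).neg (A.conj B.neg))
  | ax13 (A B : Fml α) : Hilb Γ (Fml.iff' (A.conj B).neg (A.neg.disj B.neg))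
  | ax14 (A B : Fml α) : Hilb Γ (Fml.iff' (A.disj B).neg (A.neg.conj B.neg))
  | ax15 (A : Fml α) : Hilb Γ (A.disj A.neg)

/-- The internalization (A↔B)∧(¬A↔¬B) of logical equivalence. -/
def InternEq {α : Type} (φ ψ : Fml α) : Fml α :=
  (Fml.iff' φ ψ).conj (Fml.iff' φ.neg ψ.neg)

/-- `⊥` does not occur in the formula. -/
def NoBot : Fml ℕ → Prop
  | .var _ => True
  | .bot => False
  | .neg A => NoBot A
  | .conj A B => NoBot A ∧ NoBot B
  | .disj A B => NoBot A ∧ NoBot B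
  | .imp A B => NoBot A ∧ NoBot B

/-- The set of propositional variables occurring in a formula. -/
def varsOf : Fml ℕ → Set ℕ
  | .var x => {x}
  | .bot => ∅
  | .neg A => varsOf A
  | .conj A B => varsOf A ∪ varsOf B
  | .disj A B => varsOf A ∪ varsOf B
  | .imp A B => varsOf A ∪ varsOf B
/-!
By soundness, `{A, ¬A} ⊢ B` makes `B` designated under every valuation designating `A` and
`¬A`. Since `A` is ⊥-free, giving all its variables the value `b` gives `A` and `¬A` the
value `b`; as `B` shares no variable with `A`, this can be done to any valuation without
changing the value of `B`. Hence `B` is never `f`, and `⊢ B` by a Kalmár-style completeness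
argument, in which the value of `X` is pinned down by whether `X` and `¬X` are designated,
"not designated" being expressed by `X → ⊥`.
-/

open Fml

namespace V3

def designated : V3 → Bool
  | .f => false
  | _ => true

theorem designated_iff {v : V3} : v.designated = true ↔ v ≠ .f := by
  cases v <;> decide

theorem designated_negT_negT (u : V3) : (negT (negT u)).designated = u.designated := by
  cases u <;> rfl

theorem designated_conjT (u v : V3) :
    (conjT u v).designated = (u.designated && v.designated) := by
  cases u <;> cases v <;> rfl

theorem designated_negT_conjT (u v : V3) :
    (negT (conjT u v)).designated = ((negT u).designated || (negT v).designated) := by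
  cases u <;> cases v <;> rfl

theorem designated_disjT (u v : V3) :
    (disjT u v).designated = (u.designated || v.designated) := by
  cases u <;> cases v <;> rfl

theorem designated_negT_disjT (u v : V3) :
    (negT (disjT u v)).designated = ((negT u).designated && (negT v).designated) := by
  cases u <;> cases v <;> rfl

theorem designated_impT (u v : V3) :
    (impT u v).designated = (!u.designated || v.designated) := by
  cases u <;> cases v <;> rfl

theorem designated_negT_impT (u v : V3) :
    (negT (impT u v)).designated = (u.designated && (negT v).designated) := by
  cases u <;> cases v <;> rfl

end V3

namespace Fml

variable {α : Type}

def atoms : Fml α → List α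
  | var p => [p]
  | bot => []
  | neg A => A.atoms
  | conj A B => A.atoms ++ B.atoms
  | disj A B => A.atoms ++ B.atoms
  | imp A B => A.atoms ++ B.atoms

def assert (A : Fml α) : Bool → Fml α
  | true => A
  | false => A.imp bot

def describe (A : Fml α) (v : V3) : Fml α :=
  (A.assert v.designated).conj (A.neg.assert (negT v).designated)

end Fml

def diagram {α : Type} (σ : α → V3) (L : List α) : Set (Fml α) :=
  {F | ∃ p ∈ L, F = (var p).describe (σ p)}

namespace Hilb

variable {α : Type} {Γ Δ : Set (Fml α)} {A B C : Fml α}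

theorem mono (hΓΔ : Γ ⊆ Δ) (h : Hilb Γ A) : Hilb Δ A := by
  induction h with
  | hyp hA => exact hyp (hΓΔ hA)
  | mp _ _ ih₁ ih₂ => exact mp ih₁ ih₂
  | ax1 A B => exact ax1 A B
  | ax2 A B C => exact ax2 A B C
  | ax3 A B => exact ax3 A B
  | ax4 A => exact ax4 A
  | ax5 A B => exact ax5 A B
  | ax6 A B => exact ax6 A B
  | ax7 A B => exact ax7 A B
  | ax8 A B => exact ax8 A B
  | ax9 A B => exact ax9 A B
  | ax10 A B C => exact ax10 A B C
  | ax11 A => exact ax11 A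
  | ax12 A B => exact ax12 A B
  | ax13 A B => exact ax13 A B
  | ax14 A B => exact ax14 A B
  | ax15 A => exact ax15 A

theorem weaken (h : Hilb Γ A) : Hilb (insert B Γ) A :=
  mono (Set.subset_insert _ _) h

theorem assumption : Hilb (insert A Γ) A :=
  hyp (Set.mem_insert _ _)

theorem imp_self : Hilb Γ (A.imp A) :=
  ((ax2 A (A.imp A) A).mp (ax1 A (A.imp A))).mp (ax1 A A)

theorem imp_intro (h : Hilb Γ B) : Hilb Γ (A.imp B) :=
  (ax1 B A).mp h

theorem deduction (h : Hilb (insert A Γ) B) : Hilb Γ (A.imp B) := by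
  induction h with
  | hyp hB =>
    rcases Set.mem_insert_iff.mp hB with rfl | hB
    · exact imp_self
    · exact imp_intro (hyp hB)
  | mp _ _ ih₁ ih₂ => exact ((ax2 _ _ _).mp ih₁).mp ih₂
  | ax1 A B => exact imp_intro (ax1 A B)
  | ax2 A B C => exact imp_intro (ax2 A B C)
  | ax3 A B => exact imp_intro (ax3 A B)
  | ax4 A => exact imp_intro (ax4 A)
  | ax5 A B => exact imp_intro (ax5 A B)
  | ax6 A B => exact imp_intro (ax6 A B)
  | ax7 A B => exact imp_intro (ax7 A B)
  | ax8 A B => exact imp_intro (ax8 A B)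
  | ax9 A B => exact imp_intro (ax9 A B)
  | ax10 A B C => exact imp_intro (ax10 A B C)
  | ax11 A => exact imp_intro (ax11 A)
  | ax12 A B => exact imp_intro (ax12 A B)
  | ax13 A B => exact imp_intro (ax13 A B)
  | ax14 A B => exact imp_intro (ax14 A B)
  | ax15 A => exact imp_intro (ax15 A)

theorem imp_trans (h₁ : Hilb Γ (A.imp B)) (h₂ : Hilb Γ (B.imp C)) : Hilb Γ (A.imp C) :=
  deduction ((weaken h₂).mp ((weaken h₁).mp assumption))

theorem conj_intro (hA : Hilb Γ A) (hB : Hilb Γ B) : Hilb Γ (A.conj B) :=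
  ((ax7 A B).mp hA).mp hB

theorem iff_symm (h : Hilb Γ (iff' A B)) : Hilb Γ (iff' B A) :=
  conj_intro ((ax6 _ _).mp h) ((ax5 _ _).mp h)

/-- Excluded middle `A ∨ (A → ⊥)`, from Peirce's law `((B → ⊥) → B) → B`. -/
theorem by_cases (h₁ : Hilb (insert A Γ) B) (h₂ : Hilb (insert (A.imp bot) Γ) B) :
    Hilb Γ B :=
  (ax3 B bot).mp <| deduction <|
    (weaken (deduction h₂)).mp (imp_trans (weaken (deduction h₁)) assumption)

theorem neg_of_imp_bot (h : Hilb Γ (A.imp bot)) : Hilb Γ A.neg :=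
  (((ax10 A A.neg A.neg).mp (imp_trans h (ax4 _))).mp imp_self).mp (ax15 A)

variable {a b : Bool}

theorem assert_of_iff (h : Hilb Γ (iff' A B)) (hA : Hilb Γ (A.assert a)) :
    Hilb Γ (B.assert a) := by
  cases a
  · exact imp_trans ((ax6 _ _).mp h) hA
  · exact ((ax5 _ _).mp h).mp hA

theorem assert_conj (hA : Hilb Γ (A.assert a)) (hB : Hilb Γ (B.assert b)) :
    Hilb Γ ((A.conj B).assert (a && b)) := by
  cases a <;> cases b
  · exact imp_trans (ax5 A B) hA
  · exact imp_trans (ax5 A B) hA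
  · exact imp_trans (ax6 A B) hB
  · exact conj_intro hA hB

theorem assert_disj (hA : Hilb Γ (A.assert a)) (hB : Hilb Γ (B.assert b)) :
    Hilb Γ ((A.disj B).assert (a || b)) := by
  cases a <;> cases b
  · exact ((ax10 A B bot).mp hA).mp hB
  · exact (ax9 A B).mp hB
  · exact (ax8 A B).mp hA
  · exact (ax8 A B).mp hA

theorem assert_imp (hA : Hilb Γ (A.assert a)) (hB : Hilb Γ (B.assert b)) :
    Hilb Γ ((A.imp B).assert (!a || b)) := by
  cases a <;> cases b
  · exact imp_trans hA (ax4 B)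
  · exact imp_trans hA (ax4 B)
  · exact deduction ((weaken hB).mp (assumption.mp (weaken hA)))
  · exact imp_intro hB

end Hilb

open Hilb V3

variable {α : Type} {Γ : Set (Fml α)}

/-- Kalmár's lemma for the three-valued semantics. -/
theorem Hilb.assert_eval (σ : α → V3) (D : Fml α)
    (hΓ : ∀ p ∈ D.atoms, (var p).describe (σ p) ∈ Γ) :
    Hilb Γ (D.assert (eval σ D).designated) ∧
      Hilb Γ (D.neg.assert (negT (eval σ D)).designated) := by
  induction D with
  | var p =>
    have h := hyp (hΓ p (List.mem_singleton_self p))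
    exact ⟨(ax5 _ _).mp h, (ax6 _ _).mp h⟩
  | bot => exact ⟨imp_self, neg_of_imp_bot imp_self⟩
  | neg A ih =>
    obtain ⟨hA, hnA⟩ := ih hΓ
    refine ⟨hnA, ?_⟩
    rw [eval, designated_negT_negT]
    exact assert_of_iff (iff_symm (ax11 A)) hA
  | conj A B ihA ihB =>
    obtain ⟨hA, hnA⟩ := ihA fun p hp => hΓ p (List.mem_append_left _ hp)
    obtain ⟨hB, hnB⟩ := ihB fun p hp => hΓ p (List.mem_append_right _ hp)
    rw [eval, designated_conjT, designated_negT_conjT]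
    exact ⟨assert_conj hA hB, assert_of_iff (iff_symm (ax13 A B)) (assert_disj hnA hnB)⟩
  | disj A B ihA ihB =>
    obtain ⟨hA, hnA⟩ := ihA fun p hp => hΓ p (List.mem_append_left _ hp)
    obtain ⟨hB, hnB⟩ := ihB fun p hp => hΓ p (List.mem_append_right _ hp)
    rw [eval, designated_disjT, designated_negT_disjT]
    exact ⟨assert_disj hA hB, assert_of_iff (iff_symm (ax14 A B)) (assert_conj hnA hnB)⟩
  | imp A B ihA ihB =>
    obtain ⟨hA, hnA⟩ := ihA fun p hp => hΓ p (List.mem_append_left _ hp)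
    obtain ⟨hB, hnB⟩ := ihB fun p hp => hΓ p (List.mem_append_right _ hp)
    rw [eval, designated_impT, designated_negT_impT]
    exact ⟨assert_imp hA hB, assert_of_iff (iff_symm (ax12 A B)) (assert_conj hA hnB)⟩

theorem Hilb.of_forall_describe {A B : Fml α} (h : ∀ v, Hilb (insert (A.describe v) Γ) B) :
    Hilb Γ B := by
  have h' v : Hilb Γ ((A.describe v).imp B) := deduction (h v)
  refine by_cases (A := A) ?_ ?_ <;> refine by_cases (A := A.neg) ?_ ?_
  · exact (weaken (weaken (h' .b))).mp (conj_intro (weaken assumption) assumption)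
  · exact (weaken (weaken (h' .t))).mp (conj_intro (weaken assumption) assumption)
  · exact (weaken (weaken (h' .f))).mp (conj_intro (weaken assumption) assumption)
  · exact (ax4 B).mp (assumption.mp (neg_of_imp_bot (weaken assumption)))

theorem Hilb.of_forall_diagram {B : Fml α} (L : List α) (h : ∀ σ, Hilb (diagram σ L) B) :
    Hilb ∅ B := by
  classical
  induction L with
  | nil => simpa [diagram] using h (fun _ => .t)
  | cons p L ih =>
    refine ih fun σ => of_forall_describe (A := var p) fun v =>
      mono ?_ (h (Function.update σ p v))
    rintro F ⟨q, hq, rfl⟩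
    by_cases hqp : q = p
    · subst hqp
      simp
    · rw [Function.update_of_ne hqp]
      exact Set.mem_insert_of_mem _ ⟨q, List.mem_of_ne_of_mem hqp hq, rfl⟩

theorem Hilb.of_valid {B : Fml α} (h : ∀ σ, eval σ B ≠ .f) : Hilb ∅ B :=
  of_forall_diagram B.atoms fun σ => by
    have hB := (assert_eval (Γ := diagram σ B.atoms) σ B fun p hp => ⟨p, hp, rfl⟩).1
    rwa [designated_iff.mpr (h σ)] at hB

theorem Hilb.sound {A : Fml α} (h : Hilb Γ A) : SemCons Γ A := by
  induction h with
  | hyp hA => exact fun σ hΓ => hΓ _ hA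
  | @mp A B _ _ ih₁ ih₂ =>
    intro σ hΓ
    have h₁ := ih₁ σ hΓ
    have h₂ := ih₂ σ hΓ
    rw [eval] at h₁
    revert h₁ h₂
    cases eval σ A <;> cases eval σ B <;> decide
  | ax4 A | ax11 A | ax15 A =>
    intro σ _
    simp only [eval, iff']
    cases eval σ A <;> decide
  | ax1 A B | ax3 A B | ax5 A B | ax6 A B | ax7 A B | ax8 A B | ax9 A B | ax12 A B | ax13 A B
  | ax14 A B =>
    intro σ _
    simp only [eval, iff']
    cases eval σ A <;> cases eval σ B <;> decide
  | ax2 A B C | ax10 A B C =>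
    intro σ _
    simp only [eval]
    cases eval σ A <;> cases eval σ B <;> cases eval σ C <;> decide

theorem eval_congr {C : Fml ℕ} {σ τ : ℕ → V3} (h : ∀ x ∈ varsOf C, σ x = τ x) :
    eval σ C = eval τ C := by
  induction C <;> simp_all [eval, varsOf]

/-- `b` is a fixed point of every connective, so only `⊥` can move a formula off `b`. -/
theorem eval_eq_b_of_noBot {A : Fml ℕ} {σ : ℕ → V3} (hA : NoBot A)
    (h : ∀ x ∈ varsOf A, σ x = .b) : eval σ A = .b := by
  induction A <;> simp_all [eval, varsOf, NoBot] <;> rfl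

/-- Paraconsistency of LP→⊥: if ⊥ does not occur in `A`, no variable of `A` occurs
in `B`, and `B` is not a theorem, then `B` is not derivable from `{A, ¬A}`. -/
theorem LP_paraconsistent (A B : Fml ℕ) (hA : NoBot A)
    (hvars : ∀ x, x ∈ varsOf A → x ∉ varsOf B)
    (hB : ¬ Hilb (∅ : Set (Fml ℕ)) B) :
    ¬ Hilb ({A, A.neg} : Set (Fml ℕ)) B := by
  classical
  intro h
  refine hB (Hilb.of_valid fun σ => ?_)
  let τ : ℕ → V3 := fun x => if x ∈ varsOf A then .b else σ x
  have hτA : eval τ A = .b := eval_eq_b_of_noBot hA fun x hx => if_pos hx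
  have hτB : eval τ B = eval σ B :=
    eval_congr fun x hx => if_neg fun hxA => hvars x hxA hx
  rw [← hτB]
  refine h.sound τ ?_
  rintro C (rfl | rfl) <;> simp [eval, hτA, negT]
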